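/- Let N ≥ 1 be an integer, let n > 0 be a real number, let R > 0, K > 0, γ > 1. Let H₀ > 0 and set T := 2R^{n+2}/(n(n+1)H₀). Then there exist no C¹ functions ρ, V : [0,T] × [0,∞) → ℝ such that: (i) ρ(t,r) ≥ 0 for all t, r; (ii) ρ(t,r) = 0 and V(t,r) = 0 whenever r ≥ R (compact support / non-slip boundary condition); (iii) for each t the map r ↦ ρ(t,r)^{γ−1} is differentiable on (0,R), and for all t ∈ [0,T] and 0 < r < R the radial momentum equation with repulsive force holds: ∂ₜV(t,r) + V(t,r)·∂ᵣV(t,r) + (Kγ/(γ−1))·∂ᵣ(ρ(t,r)^{γ−1}) = α(N)·r^{1−N}·∫₀^r ρ(t,s) s^{N−1} ds; (iv) ∫₀^R r^n V(0,r) dr = H₀. In other words, such a solution blows up on or before the finite time T = 2R^{n+2}/(n(n+1)H₀). -/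

import Mathlib

/-!
The functional `H(t) = ∫₀^R rⁿ V dr` obeys a Riccati inequality. Multiply the momentum equation
by `rⁿ` and integrate: the repulsive force contributes a nonnegative amount, and integration by
parts (the boundary terms vanish: `rⁿ` at `r = 0`, `V` and `ρ` at `r = R`) turns the convection
and pressure terms into the contributions `(n/2) ∫ rⁿ⁻¹ V²` and `nκ ∫ rⁿ⁻¹ ρ^{γ-1} ≥ 0` to `H'`.
Cauchy–Schwarz bounds `H² ≤ R^{n+2}/(n+2) · ∫ rⁿ⁻¹ V²`, so `H' ≥ c H²` with
`c = n(n+2)/(2R^{n+2})`. Then `1/H + c t` is nonincreasing, which forces `c T < 1/H₀`; but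
`c T = (n+2)/((n+1)H₀)`.
-/

open Set MeasureTheory intervalIntegral Function

/-- The constant `α(N)`: `α(1) = 1`, `α(2) = 2π`, and
`α(N) = N(N−2)·π^{N/2}/Γ(N/2+1)` for `N ≥ 3`. -/
noncomputable def alphaConst (N : ℕ) : ℝ :=
  if N = 1 then 1
  else if N = 2 then 2 * Real.pi
  else (N : ℝ) * ((N : ℝ) - 2) * Real.pi ^ ((N : ℝ) / 2) / Real.Gamma ((N : ℝ) / 2 + 1)

theorem alphaConst_nonneg (N : ℕ) : 0 ≤ alphaConst N := by
  unfold alphaConst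
  split_ifs with h1 h2
  · exact zero_le_one
  · positivity
  · have hN : 0 ≤ (N : ℝ) * ((N : ℝ) - 2) := by
      rcases Nat.eq_zero_or_pos N with rfl | hpos
      · simp
      · have : (3 : ℝ) ≤ N := by exact_mod_cast (show 3 ≤ N by omega)
        nlinarith
    have := Real.Gamma_pos_of_pos (show 0 < (N : ℝ) / 2 + 1 by positivity)
    positivity

/-- The force term `Φᵣ` of the density profile `ρ`. -/
noncomputable def radialForce (N : ℕ) (ρ : ℝ → ℝ) (r : ℝ) : ℝ :=
  alphaConst N * r ^ ((1 : ℝ) - N) * ∫ s in (0 : ℝ)..r, ρ s * s ^ (N - 1)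

theorem radialForce_nonneg (N : ℕ) {ρ : ℝ → ℝ} {r : ℝ} (hr : 0 ≤ r)
    (hρ : ∀ s ∈ Icc 0 r, 0 ≤ ρ s) : 0 ≤ radialForce N ρ r :=
  mul_nonneg (mul_nonneg (alphaConst_nonneg N) (Real.rpow_nonneg hr _))
    (integral_nonneg hr fun s hs => mul_nonneg (hρ s hs) (pow_nonneg hs.1 _))

theorem mul_lt_inv_of_sq_le_deriv {u u' : ℝ → ℝ} {c T : ℝ} (hc : 0 ≤ c) (hT : 0 ≤ T)
    (hu : ContinuousOn u (Icc 0 T)) (hu' : ∀ t ∈ Ioo 0 T, HasDerivAt u (u' t) t)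
    (hsq : ∀ t ∈ Ioo 0 T, c * u t ^ 2 ≤ u' t) (hu0 : 0 < u 0) : c * T < (u 0)⁻¹ := by
  have hmono : MonotoneOn u (Icc 0 T) := by
    refine monotoneOn_of_hasDerivWithinAt_nonneg (f' := u') (convex_Icc 0 T) hu ?_ ?_ <;>
      rw [interior_Icc]
    · exact fun t ht => (hu' t ht).hasDerivWithinAt
    · exact fun t ht => (mul_nonneg hc (sq_nonneg _)).trans (hsq t ht)
  have hpos : ∀ t ∈ Icc 0 T, 0 < u t := fun t ht =>
    hu0.trans_le (hmono (left_mem_Icc.2 hT) ht ht.1)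
  have hanti : AntitoneOn (fun t => (u t)⁻¹ + c * t) (Icc 0 T) := by
    refine antitoneOn_of_hasDerivWithinAt_nonpos (convex_Icc 0 T)
      ((hu.inv₀ fun t ht => (hpos t ht).ne').add (continuousOn_const.mul continuousOn_id))
      (f' := fun t => -u' t / u t ^ 2 + c) ?_ ?_ <;> rw [interior_Icc]
    · intro t ht
      have := ((hu' t ht).inv (hpos t (Ioo_subset_Icc_self ht)).ne').add
        ((hasDerivAt_id' t).const_mul c)
      exact (mul_one c ▸ this).hasDerivWithinAt
    · intro t ht
      have h := hpos t (Ioo_subset_Icc_self ht)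
      rw [neg_div, neg_add_nonpos_iff, le_div_iff₀ (by positivity)]
      exact hsq t ht
  have hT' := hanti (left_mem_Icc.2 hT) (right_mem_Icc.2 hT) hT
  have := inv_pos.2 (hpos T (right_mem_Icc.2 hT))
  simp only [mul_zero, add_zero] at hT'
  linarith

theorem intervalIntegrable_rpow_mul {w : ℝ → ℝ} {p R : ℝ} (hp : -1 < p) (hR : 0 ≤ R)
    (hw : ContinuousOn w (Icc 0 R)) : IntervalIntegrable (fun r => r ^ p * w r) volume 0 R :=
  (intervalIntegrable_rpow' hp).mul_continuousOn (by rwa [uIcc_of_le hR])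

theorem sq_integral_rpow_mul_le {v : ℝ → ℝ} {n R : ℝ} (hn : 0 < n) (hR : 0 < R)
    (hv : ContinuousOn v (Icc 0 R)) :
    (∫ r in 0..R, r ^ n * v r) ^ 2 ≤
      R ^ (n + 2) / (n + 2) * ∫ r in 0..R, r ^ (n - 1) * v r ^ 2 := by
  set A := R ^ (n + 2) / (n + 2)
  set H := ∫ r in 0..R, r ^ n * v r
  set B := ∫ r in 0..R, r ^ (n - 1) * v r ^ 2
  have hA : ∫ r in 0..R, r ^ (n + 1) = A := by
    rw [integral_rpow (Or.inl (by linarith)), Real.zero_rpow (by linarith), add_assoc]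
    simp only [A]
    ring_nf
  have hApos : 0 < A := by positivity
  -- `0 ≤ ∫ r ^ (n - 1) (l r - v r) ^ 2` is a quadratic polynomial in `l`; take `l = H / A`
  set l := H / A
  have hexpand : ∀ r ∈ uIcc 0 R, r ^ (n - 1) * (l * r - v r) ^ 2 =
      l ^ 2 * r ^ (n + 1) - 2 * l * (r ^ n * v r) + r ^ (n - 1) * v r ^ 2 := by
    intro r hr
    rw [uIcc_of_le hR.le] at hr
    have h1 : r ^ (n + 1) = r ^ (n - 1) * r ^ 2 := by
      rw [← Real.rpow_natCast, ← Real.rpow_add' hr.1 (by push_cast; linarith)]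
      ring_nf
    have h2 : r ^ n = r ^ (n - 1) * r := by
      rw [← Real.rpow_add_one' hr.1 (by linarith)]
      ring_nf
    rw [h1, h2]
    ring
  have hquad : 0 ≤ l ^ 2 * A - 2 * l * H + B := by
    have hnonneg : 0 ≤ ∫ r in 0..R, r ^ (n - 1) * (l * r - v r) ^ 2 :=
      integral_nonneg hR.le fun r hr => mul_nonneg (Real.rpow_nonneg hr.1 _) (sq_nonneg _)
    have hi1 := intervalIntegrable_rpow_mul (w := fun _ => 1) (p := n + 1) (by linarith)
      hR.le continuousOn_const
    have hi2 := intervalIntegrable_rpow_mul (p := n) (by linarith) hR.le hv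
    have hi3 := intervalIntegrable_rpow_mul (w := fun r => v r ^ 2) (p := n - 1) (by linarith)
      hR.le (hv.pow 2)
    simp only [mul_one] at hi1
    rwa [integral_congr hexpand, intervalIntegral.integral_add ((hi1.const_mul _).sub
      (hi2.const_mul _)) hi3, intervalIntegral.integral_sub (hi1.const_mul _) (hi2.const_mul _),
      intervalIntegral.integral_const_mul, intervalIntegral.integral_const_mul, hA] at hnonneg
  have : l ^ 2 * A - 2 * l * H + B = B - H ^ 2 / A := by
    simp only [l]
    field_simp
    ring
  rw [this, sub_nonneg, div_le_iff₀ hApos] at hquad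
  linarith

theorem half_mul_integral_sq_le_integral_of_momentum {v vt p : ℝ → ℝ} {n R κ : ℝ}
    (hn : 0 < n) (hR : 0 ≤ R) (hκ : 0 ≤ κ)
    (hv : ContinuousOn v (Icc 0 R)) (hvd : ∀ r ∈ Ioo 0 R, DifferentiableAt ℝ v r)
    (hp : ContinuousOn p (Icc 0 R)) (hpd : ∀ r ∈ Ioo 0 R, DifferentiableAt ℝ p r)
    (hvt : IntervalIntegrable (fun r => r ^ n * vt r) volume 0 R)
    (hp0 : ∀ r ∈ Ioo 0 R, 0 ≤ p r) (hvR : v R = 0) (hpR : p R = 0)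
    (hmom : ∀ r ∈ Ioo 0 R, 0 ≤ vt r + v r * deriv v r + κ * deriv p r) :
    n / 2 * ∫ r in 0..R, r ^ (n - 1) * v r ^ 2 ≤ ∫ r in 0..R, r ^ n * vt r := by
  set g : ℝ → ℝ := fun r => r ^ n * (v r ^ 2 / 2 + κ * p r)
  have hg : ContinuousOn g (Icc 0 R) :=
    (Real.continuous_rpow_const hn.le).continuousOn.mul
      (((hv.pow 2).div_const 2).add (continuousOn_const.mul hp))
  have hg' : ∀ r ∈ Ioo 0 R, HasDerivAt g (n * r ^ (n - 1) * (v r ^ 2 / 2 + κ * p r)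
      + r ^ n * (v r * deriv v r + κ * deriv p r)) r := by
    intro r hr
    have hq : HasDerivAt (fun x => v x ^ 2 / 2 + κ * p x)
        (v r * deriv v r + κ * deriv p r) r := by
      refine ((((hvd r hr).hasDerivAt.fun_pow 2).div_const 2).fun_add
        ((hpd r hr).hasDerivAt.const_mul κ)).congr_deriv ?_
      simp only [Nat.cast_ofNat, Nat.reduceSub, pow_one]
      ring
    exact (Real.hasDerivAt_rpow_const (Or.inl hr.1.ne')).mul hq
  have hle : ∀ r ∈ Ioo 0 R, n / 2 * (r ^ (n - 1) * v r ^ 2) - r ^ n * vt r ≤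
      n * r ^ (n - 1) * (v r ^ 2 / 2 + κ * p r) + r ^ n * (v r * deriv v r + κ * deriv p r) := by
    intro r hr
    have h1 : 0 ≤ n * r ^ (n - 1) * (κ * p r) :=
      mul_nonneg (mul_nonneg hn.le (Real.rpow_nonneg hr.1.le _)) (mul_nonneg hκ (hp0 r hr))
    have h2 := mul_nonneg (Real.rpow_nonneg hr.1.le n) (hmom r hr)
    linarith
  have hB := intervalIntegrable_rpow_mul (w := fun r => v r ^ 2) (p := n - 1) (by linarith) hR
    (hv.pow 2)
  have key := integral_le_sub_of_hasDeriv_right_of_le hR hg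
    (fun r hr => (hg' r hr).hasDerivWithinAt)
    ((intervalIntegrable_iff_integrableOn_Icc_of_le hR).1 ((hB.const_mul (n / 2)).sub hvt)) hle
  rw [intervalIntegral.integral_sub (hB.const_mul _) hvt, intervalIntegral.integral_const_mul]
    at key
  have hgR : g R = 0 := by simp only [g, hvR, hpR]; ring
  have hg0 : g 0 = 0 := by simp only [g, Real.zero_rpow hn.ne', zero_mul]
  rw [hgR, hg0, sub_zero, sub_nonpos] at key
  exact key

theorem hasDerivAt_intervalIntegral_of_continuousOn {F F' : ℝ → ℝ → ℝ} {t₀ t₁ a b t : ℝ}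
    (hab : a ≤ b) (ht : t ∈ Ioo t₀ t₁) (hF : ∀ τ ∈ Ioo t₀ t₁, ContinuousOn (F τ) (Icc a b))
    (hF' : ContinuousOn (uncurry F') (Icc t₀ t₁ ×ˢ Icc a b))
    (hderiv : ∀ τ ∈ Ioo t₀ t₁, ∀ r ∈ Icc a b, HasDerivAt (F · r) (F' τ r) τ) :
    HasDerivAt (fun τ => ∫ r in a..b, F τ r) (∫ r in a..b, F' t r) t := by
  obtain ⟨M, hM⟩ := (isCompact_Icc.prod isCompact_Icc).exists_bound_of_continuousOn hF'
  have hab' : uIoc a b ⊆ Icc a b := by rw [uIoc_of_le hab]; exact Ioc_subset_Icc_self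
  refine (hasDerivAt_integral_of_dominated_loc_of_deriv_le (bound := fun _ => M)
    (Ioo_mem_nhds ht.1 ht.2) ?_ ((hF t ht).intervalIntegrable_of_Icc hab) ?_ ?_
    intervalIntegrable_const ?_).2
  · filter_upwards [Ioo_mem_nhds ht.1 ht.2] with τ hτ
    exact ((hF τ hτ).mono hab').aestronglyMeasurable measurableSet_uIoc
  · exact ((hF'.uncurry_left t (Ioo_subset_Icc_self ht)).mono hab').aestronglyMeasurable
      measurableSet_uIoc
  · exact ae_of_all _ fun r hr τ hτ => hM (τ, r) ⟨Ioo_subset_Icc_self hτ, hab' hr⟩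
  · exact ae_of_all _ fun r hr τ hτ => hderiv τ hτ r (hab' hr)

theorem continuousOn_intervalIntegral_of_continuousOn {F : ℝ → ℝ → ℝ} {t₀ t₁ a b : ℝ}
    (hab : a ≤ b) (hF : ContinuousOn (uncurry F) (Icc t₀ t₁ ×ˢ Icc a b)) :
    ContinuousOn (fun τ => ∫ r in a..b, F τ r) (Icc t₀ t₁) := by
  obtain ⟨M, hM⟩ := (isCompact_Icc.prod isCompact_Icc).exists_bound_of_continuousOn hF
  have hab' : uIoc a b ⊆ Icc a b := by rw [uIoc_of_le hab]; exact Ioc_subset_Icc_self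
  intro t ht
  refine continuousWithinAt_of_dominated_interval (bound := fun _ => M) ?_ ?_
    intervalIntegrable_const ?_
  · filter_upwards [self_mem_nhdsWithin] with τ hτ
    exact ((hF.uncurry_left τ hτ).mono hab').aestronglyMeasurable measurableSet_uIoc
  · filter_upwards [self_mem_nhdsWithin] with τ hτ
    exact ae_of_all _ fun r hr => hM (τ, r) ⟨hτ, hab' hr⟩
  · exact ae_of_all _ fun r hr => hF.uncurry_right r (hab' hr) t ht

section ContDiffOnRectangle

variable {f : ℝ → ℝ → ℝ} {t₀ t₁ a b τ r : ℝ}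

theorem ContDiffOn.hasDerivAt_left (hf : ContDiffOn ℝ 1 (uncurry f) (Icc t₀ t₁ ×ˢ Icc a b))
    (hτ : τ ∈ Ioo t₀ t₁) (hr : r ∈ Icc a b) :
    HasDerivAt (f · r) (fderivWithin ℝ (uncurry f) (Icc t₀ t₁ ×ˢ Icc a b) (τ, r) (1, 0)) τ := by
  have hd := (hf.differentiableOn one_ne_zero (τ, r) ⟨Ioo_subset_Icc_self hτ, hr⟩)
  exact (hd.hasFDerivWithinAt.comp_hasDerivWithinAt τ
    ((hasDerivWithinAt_id τ _).prodMk (hasDerivWithinAt_const τ _ r))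
    (fun σ hσ => mk_mem_prod hσ hr)).hasDerivAt (Icc_mem_nhds hτ.1 hτ.2)

theorem ContDiffOn.differentiableAt_right
    (hf : ContDiffOn ℝ 1 (uncurry f) (Icc t₀ t₁ ×ˢ Icc a b))
    (hτ : τ ∈ Icc t₀ t₁) (hr : r ∈ Ioo a b) : DifferentiableAt ℝ (f τ) r := by
  have hd := (hf.differentiableOn one_ne_zero (τ, r) ⟨hτ, Ioo_subset_Icc_self hr⟩)
  exact ((hd.hasFDerivWithinAt.comp_hasDerivWithinAt r
    ((hasDerivWithinAt_const r _ τ).prodMk (hasDerivWithinAt_id r _))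
    (fun σ hσ => mk_mem_prod hτ hσ)).hasDerivAt (Icc_mem_nhds hr.1 hr.2)).differentiableAt

theorem ContDiffOn.continuousOn_fderivWithin_left
    (hf : ContDiffOn ℝ 1 (uncurry f) (Icc t₀ t₁ ×ˢ Icc a b)) (ht : t₀ < t₁) (hab : a < b) :
    ContinuousOn (fun p => fderivWithin ℝ (uncurry f) (Icc t₀ t₁ ×ˢ Icc a b) p (1, 0))
      (Icc t₀ t₁ ×ˢ Icc a b) := by
  have hU : UniqueDiffOn ℝ (Icc t₀ t₁ ×ˢ Icc a b) :=
    (uniqueDiffOn_Icc ht).prod (uniqueDiffOn_Icc hab)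
  exact (hf.continuousOn_fderivWithin hU le_rfl).clm_apply continuousOn_const

theorem ContDiffOn.continuousOn_deriv_left
    (hf : ContDiffOn ℝ 1 (uncurry f) (Icc t₀ t₁ ×ˢ Icc a b)) (hτ : τ ∈ Ioo t₀ t₁) (hab : a < b) :
    ContinuousOn (fun r => deriv (f · r) τ) (Icc a b) :=
  ((hf.continuousOn_fderivWithin_left (hτ.1.trans hτ.2) hab).comp (f := fun r => (τ, r))
    (by fun_prop) fun r hr => ⟨Ioo_subset_Icc_self hτ, hr⟩).congr
    fun r hr => (hf.hasDerivAt_left hτ hr).deriv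

theorem ContDiffOn.hasDerivAt_intervalIntegral_mul {w : ℝ → ℝ}
    (hf : ContDiffOn ℝ 1 (uncurry f) (Icc t₀ t₁ ×ˢ Icc a b)) (hab : a < b)
    (hw : ContinuousOn w (Icc a b)) (hτ : τ ∈ Ioo t₀ t₁) :
    HasDerivAt (fun σ => ∫ r in a..b, w r * f σ r) (∫ r in a..b, w r * deriv (f · r) τ) τ := by
  have hD := hf.continuousOn_fderivWithin_left (hτ.1.trans hτ.2) hab
  have key := hasDerivAt_intervalIntegral_of_continuousOn (F := fun σ r => w r * f σ r)
    (F' := fun σ r => w r * fderivWithin ℝ (uncurry f) (Icc t₀ t₁ ×ˢ Icc a b) (σ, r) (1, 0))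
    hab.le hτ (fun σ hσ => hw.mul (hf.continuousOn.uncurry_left σ (Ioo_subset_Icc_self hσ)))
    ((hw.comp continuousOn_snd fun p hp => hp.2).mul hD)
    (fun σ hσ r hr => (hf.hasDerivAt_left hσ hr).const_mul (w r))
  refine key.congr_deriv (integral_congr fun r hr => ?_)
  rw [uIcc_of_le hab.le] at hr
  simp only [(hf.hasDerivAt_left hτ hr).deriv]

end ContDiffOnRectangle

theorem blowup_eulerPoisson_repulsive_with_pressure_general
    (N : ℕ) (n R K γ H₀ T : ℝ)
    (hn : 0 < n) (hR : 0 < R) (hK : 0 < K) (hγ : 1 < γ) (hH₀ : 0 < H₀)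
    (hT : T = 2 * R ^ (n + 2) / (n * (n + 1) * H₀))
    (ρ V : ℝ → ℝ → ℝ)
    (hρC1 : ContDiffOn ℝ 1 (Function.uncurry ρ) (Set.Icc 0 T ×ˢ Set.Ici 0))
    (hVC1 : ContDiffOn ℝ 1 (Function.uncurry V) (Set.Icc 0 T ×ˢ Set.Ici 0))
    (hρnn : ∀ t r, 0 ≤ ρ t r)
    (hsupp : ∀ t r, R ≤ r → ρ t r = 0 ∧ V t r = 0)
    (hdiffp : ∀ t ∈ Set.Icc (0:ℝ) T, ∀ r ∈ Set.Ioo (0:ℝ) R,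
      DifferentiableAt ℝ (fun s => ρ t s ^ (γ - 1)) r)
    (hmom : ∀ t ∈ Set.Icc (0:ℝ) T, ∀ r ∈ Set.Ioo (0:ℝ) R,
      deriv (fun τ => V τ r) t + V t r * deriv (fun s => V t s) r
        + (K * γ / (γ - 1)) * deriv (fun s => ρ t s ^ (γ - 1)) r
      = alphaConst N * r ^ ((1:ℝ) - N) * ∫ s in (0:ℝ)..r, ρ t s * s ^ (N - 1))
    (hH0 : (∫ r in (0:ℝ)..R, r ^ n * V 0 r) = H₀) :
    False := by
  have hT0 : 0 < T := by rw [hT]; positivity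
  have hrect : Icc 0 T ×ˢ Icc 0 R ⊆ Icc 0 T ×ˢ Ici (0 : ℝ) :=
    prod_mono subset_rfl Icc_subset_Ici_self
  have hV := hVC1.mono hrect
  have hρ := hρC1.continuousOn.mono hrect
  have hw : ContinuousOn (fun r : ℝ => r ^ n) (Icc 0 R) :=
    (Real.continuous_rpow_const hn.le).continuousOn
  set c := n * (n + 2) / (2 * R ^ (n + 2))
  have hRiccati : ∀ t ∈ Ioo 0 T, c * (∫ r in 0..R, r ^ n * V t r) ^ 2 ≤
      ∫ r in 0..R, r ^ n * deriv (V · r) t := by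
    intro t ht
    have ht' := Ioo_subset_Icc_self ht
    have hVt := hV.continuousOn.uncurry_left t ht'
    calc c * (∫ r in 0..R, r ^ n * V t r) ^ 2
        ≤ c * (R ^ (n + 2) / (n + 2) * ∫ r in 0..R, r ^ (n - 1) * V t r ^ 2) :=
          mul_le_mul_of_nonneg_left (sq_integral_rpow_mul_le hn hR hVt) (by positivity)
      _ = n / 2 * ∫ r in 0..R, r ^ (n - 1) * V t r ^ 2 := by
          simp only [c]
          field_simp
      _ ≤ ∫ r in 0..R, r ^ n * deriv (V · r) t :=
          half_mul_integral_sq_le_integral_of_momentum hn hR.le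
            (div_nonneg (mul_pos hK (by linarith)).le (by linarith)) hVt
            (fun r hr => hV.differentiableAt_right ht' hr)
            ((hρ.uncurry_left t ht').rpow_const fun _ _ => Or.inr (by linarith)) (hdiffp t ht')
            (intervalIntegrable_rpow_mul (by linarith) hR.le (hV.continuousOn_deriv_left ht hR))
            (fun r _ => Real.rpow_nonneg (hρnn t r) _) (hsupp t R le_rfl).2
            (by simp only [(hsupp t R le_rfl).1, Real.zero_rpow (by linarith : γ - 1 ≠ 0)])
            (fun r hr => le_of_le_of_eq (radialForce_nonneg N hr.1.le fun s _ => hρnn t s)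
              (hmom t ht' r hr).symm)
  have hcT := mul_lt_inv_of_sq_le_deriv (by positivity) hT0.le
    (continuousOn_intervalIntegral_of_continuousOn (F := fun t r => r ^ n * V t r) hR.le
      ((hw.comp continuousOn_snd fun p hp => hp.2).mul hV.continuousOn))
    (fun t ht => hV.hasDerivAt_intervalIntegral_mul hR hw ht) hRiccati (hH0 ▸ hH₀)
  have : c * T = H₀⁻¹ * ((n + 2) / (n + 1)) := by
    simp only [c, hT]
    field_simp
  rw [hH0, this] at hcT
  exact hcT.not_ge (le_mul_of_one_le_right (inv_pos.2 hH₀).le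
    ((one_le_div (by linarith)).2 (by linarith)))

/-- Blowup on or before `T = 2R^{n+2}/(n(n+1)H₀)` for the `C¹` solutions of the
`N`-dimensional Euler–Poisson equations with repulsive forces (`δ = 1`) and pressure
(`K > 0`, `γ > 1`), in radial symmetry, with compact support in `[0,R]` and initial
functional `H₀ = ∫₀^R rⁿ V₀ dr > 0`: no such solution exists on all of `[0,T]`. -/
theorem blowup_eulerPoisson_repulsive_with_pressure
    (N : ℕ) (hN : 1 ≤ N) (n R K γ H₀ T : ℝ)
    (hn : 0 < n) (hR : 0 < R) (hK : 0 < K) (hγ : 1 < γ) (hH₀ : 0 < H₀)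
    (hT : T = 2 * R ^ (n + 2) / (n * (n + 1) * H₀))
    (ρ V : ℝ → ℝ → ℝ)
    (hρC1 : ContDiffOn ℝ 1 (Function.uncurry ρ) (Set.Icc 0 T ×ˢ Set.Ici 0))
    (hVC1 : ContDiffOn ℝ 1 (Function.uncurry V) (Set.Icc 0 T ×ˢ Set.Ici 0))
    (hρnn : ∀ t r, 0 ≤ ρ t r)
    (hsupp : ∀ t r, R ≤ r → ρ t r = 0 ∧ V t r = 0)
    (hdiffp : ∀ t ∈ Set.Icc (0:ℝ) T, ∀ r ∈ Set.Ioo (0:ℝ) R,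
      DifferentiableAt ℝ (fun s => ρ t s ^ (γ - 1)) r)
    (hmom : ∀ t ∈ Set.Icc (0:ℝ) T, ∀ r ∈ Set.Ioo (0:ℝ) R,
      deriv (fun τ => V τ r) t + V t r * deriv (fun s => V t s) r
        + (K * γ / (γ - 1)) * deriv (fun s => ρ t s ^ (γ - 1)) r
      = alphaConst N * r ^ ((1:ℝ) - N) * ∫ s in (0:ℝ)..r, ρ t s * s ^ (N - 1))
    (hH0 : (∫ r in (0:ℝ)..R, r ^ n * V 0 r) = H₀) :
    False :=
  blowup_eulerPoisson_repulsive_with_pressure_general N n R K γ H₀ T hn hR hK hγ hH₀ hT ρ V hρC1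
    hVC1 hρnn hsupp hdiffp hmom hH0
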